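/- arXiv:0809.2506 — 3 statements merged into one kernel-verified Lean document; each statement's English description precedes it below -/
import Mathlib

section
/- For every μ ∈ ℝ, the function f : ℝ → ℝ defined by f(x) = K_μ(e^{−x}) is twice differentiable and satisfies f''(x) = (e^{−2x} + μ²) f(x) for all x ∈ ℝ. -/
open Real

/-- The Macdonald function `K_μ(z) = (1/2) (z/2)^μ ∫_0^∞ t^{-1-μ} exp(-t - z²/(4t)) dt`. -/
noncomputable def macdonaldK (μ z : ℝ) : ℝ :=
  (1 / 2) * (z / 2) ^ μ *
    ∫ t in Set.Ioi (0 : ℝ), t ^ (-1 - μ) * Real.exp (-t - z ^ 2 / (4 * t))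

/-!
With `J_ν(c) = ∫_0^∞ t^{-1-ν} e^{-t-c/t} dt` one has
`K_μ(e^{-x}) = 2^{-μ-1} e^{-μx} J_μ(e^{-2x}/4)`.
Differentiating under the integral sign gives `J_ν' = -J_{ν+1}`, and integrating
`d/dt (t^{-ν} e^{-t-c/t})` over `(0, ∞)` gives the recurrence `c J_{ν+1} = J_{ν-1} + ν J_ν`.
With the chain rule, two applications of the recurrence produce the ODE. All integrability and
boundary terms are controlled by `e^{-c/t} ≤ n! (t/c)^n`, which reduces them to Euler's Gamma
integral.
-/

open MeasureTheory Set Filter Topology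

noncomputable def macdonaldIntegral (ν c : ℝ) : ℝ :=
  ∫ t in Ioi 0, t ^ (-1 - ν) * exp (-t - c / t)

theorem continuousOn_rpow_mul_exp_neg_sub_div (a c : ℝ) :
    ContinuousOn (fun t : ℝ => t ^ a * exp (-t - c / t)) (Ioi 0) := by
  intro t ht
  have ht : t ≠ 0 := (mem_Ioi.1 ht).ne'
  refine ContinuousAt.continuousWithinAt ?_
  fun_prop (disch := simp [ht])

theorem exp_neg_div_le_factorial_mul_pow {c t : ℝ} (hc : 0 < c) (ht : 0 < t) (n : ℕ) :
    exp (-(c / t)) ≤ n.factorial / c ^ n * t ^ n := by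
  have h := Real.pow_div_factorial_le_exp _ (div_pos hc ht).le n
  rw [div_pow] at h
  rw [exp_neg, inv_le_iff_one_le_mul₀ (exp_pos _)]
  calc (1 : ℝ) = n.factorial / c ^ n * t ^ n * (c ^ n / t ^ n / n.factorial) := by
        field_simp
    _ ≤ n.factorial / c ^ n * t ^ n * exp (c / t) := by gcongr

theorem rpow_mul_exp_neg_sub_div_le {a c t : ℝ} (hc : 0 < c) (ht : 0 < t) (n : ℕ) :
    t ^ a * exp (-t - c / t) ≤ n.factorial / c ^ n * (exp (-t) * t ^ (a + n)) := by
  rw [sub_eq_add_neg, exp_add, rpow_add ht, rpow_natCast]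
  have := exp_neg_div_le_factorial_mul_pow hc ht n
  calc t ^ a * (exp (-t) * exp (-(c / t)))
      ≤ t ^ a * (exp (-t) * (n.factorial / c ^ n * t ^ n)) := by gcongr
    _ = _ := by ring

theorem integrableOn_rpow_mul_exp_neg_sub_div (a : ℝ) {c : ℝ} (hc : 0 < c) :
    IntegrableOn (fun t : ℝ => t ^ a * exp (-t - c / t)) (Ioi 0) := by
  obtain ⟨n, hn⟩ := exists_nat_gt (-a - 1)
  have hGamma := (GammaIntegral_convergent (s := a + 1 + n) (by linarith)).const_mul
    (n.factorial / c ^ n)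
  refine hGamma.mono' ((continuousOn_rpow_mul_exp_neg_sub_div a c).aestronglyMeasurable
    measurableSet_Ioi) ?_
  filter_upwards [ae_restrict_mem measurableSet_Ioi] with t (ht : 0 < t)
  rw [norm_of_nonneg (by positivity), show a + 1 + n - 1 = a + n by ring]
  exact rpow_mul_exp_neg_sub_div_le hc ht n

theorem tendsto_rpow_mul_exp_neg_sub_div_atTop (a c : ℝ) :
    Tendsto (fun t : ℝ => t ^ a * exp (-t - c / t)) atTop (𝓝 0) := by
  have h₁ := tendsto_rpow_mul_exp_neg_mul_atTop_nhds_zero a 1 one_pos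
  have h₂ : Tendsto (fun t : ℝ => exp (-(c / t))) atTop (𝓝 1) := by
    simpa using ((tendsto_const_nhds (x := c)).div_atTop tendsto_id).neg.rexp
  convert h₁.mul h₂ using 2 with t
  · rw [sub_eq_add_neg, exp_add, neg_one_mul, mul_assoc]
  · rw [mul_one]

theorem tendsto_rpow_mul_exp_neg_sub_div_nhdsGT_zero (a : ℝ) {c : ℝ} (hc : 0 < c) :
    Tendsto (fun t : ℝ => t ^ a * exp (-t - c / t)) (𝓝[>] 0) (𝓝 0) := by
  obtain ⟨n, hn⟩ := exists_nat_gt (-a)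
  have hbound : Tendsto (fun t : ℝ => n.factorial / c ^ n * (exp (-t) * t ^ (a + n)))
      (𝓝[>] 0) (𝓝 0) := by
    have : ContinuousAt (fun t : ℝ => n.factorial / c ^ n * (exp (-t) * t ^ (a + n))) 0 := by
      fun_prop (disch := right; linarith)
    simpa [zero_rpow (by linarith : a + n ≠ 0)] using this.tendsto.mono_left nhdsWithin_le_nhds
  refine tendsto_of_tendsto_of_tendsto_of_le_of_le' tendsto_const_nhds hbound ?_ ?_
  all_goals filter_upwards [self_mem_nhdsWithin] with t (ht : 0 < t)
  · positivity
  · exact rpow_mul_exp_neg_sub_div_le hc ht n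

theorem hasDerivAt_rpow_mul_exp_neg_sub_div (a : ℝ) {t : ℝ} (ht : 0 < t) (x : ℝ) :
    HasDerivAt (fun x => t ^ a * exp (-t - x / t)) (-(t ^ (a - 1) * exp (-t - x / t))) x := by
  have h := (((hasDerivAt_id x).div_const t).const_sub (-t)).exp.const_mul (t ^ a)
  refine h.congr_deriv ?_
  rw [rpow_sub_one ht.ne', id]
  ring

theorem hasDerivAt_macdonaldIntegral (ν : ℝ) {c : ℝ} (hc : 0 < c) :
    HasDerivAt (macdonaldIntegral ν) (-macdonaldIntegral (ν + 1) c) c := by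
  have key := hasDerivAt_integral_of_dominated_loc_of_deriv_le (μ := volume.restrict (Ioi 0))
    (F := fun x t => t ^ (-1 - ν) * exp (-t - x / t))
    (F' := fun x t => -(t ^ (-1 - (ν + 1)) * exp (-t - x / t)))
    (bound := fun t => t ^ (-1 - (ν + 1)) * exp (-t - c / 2 / t))
    (Ioi_mem_nhds (half_lt_self hc))
    (.of_forall fun x => (continuousOn_rpow_mul_exp_neg_sub_div _ x).aestronglyMeasurable
      measurableSet_Ioi)
    (integrableOn_rpow_mul_exp_neg_sub_div _ hc)
    ((continuousOn_rpow_mul_exp_neg_sub_div _ c).aestronglyMeasurable measurableSet_Ioi).neg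
    ?_ (integrableOn_rpow_mul_exp_neg_sub_div _ (half_pos hc)) ?_
  · have := key.2
    rwa [integral_neg] at this
  · filter_upwards [ae_restrict_mem measurableSet_Ioi] with t (ht : 0 < t) x (hx : c / 2 < x)
    rw [norm_neg, norm_of_nonneg (by positivity)]
    gcongr
  · filter_upwards [ae_restrict_mem measurableSet_Ioi] with t (ht : 0 < t) x _
    have := hasDerivAt_rpow_mul_exp_neg_sub_div (-1 - ν) ht x
    rwa [sub_sub] at this

theorem macdonaldIntegral_recurrence (ν : ℝ) {c : ℝ} (hc : 0 < c) :
    c * macdonaldIntegral (ν + 1) c =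
      macdonaldIntegral (ν - 1) c + ν * macdonaldIntegral ν c := by
  set k : ℝ → ℝ → ℝ := fun a t => t ^ a * exp (-t - c / t) with hk_def
  have hk : ∀ a, IntegrableOn (k a) (Ioi 0) := fun a => integrableOn_rpow_mul_exp_neg_sub_div a hc
  have hJ : ∀ ν, macdonaldIntegral ν c = ∫ t in Ioi 0, k (-1 - ν) t := fun _ => rfl
  have hu : ∀ t ∈ Ioi (0 : ℝ), HasDerivAt (fun t => t ^ (-ν)) (-ν * t ^ (-ν - 1)) t :=
    fun t ht => hasDerivAt_rpow_const (.inl (ne_of_gt ht))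
  have hv : ∀ t ∈ Ioi (0 : ℝ), HasDerivAt (fun t => exp (-t - c / t))
      (exp (-t - c / t) * (-1 - (0 * t - c * 1) / t ^ 2)) t :=
    fun t ht => ((hasDerivAt_id t).neg.sub ((hasDerivAt_const t c).div (hasDerivAt_id t)
      (ne_of_gt ht))).exp
  have hcomb : EqOn (fun t => -ν * t ^ (-ν - 1) * exp (-t - c / t) +
        t ^ (-ν) * (exp (-t - c / t) * (-1 - (0 * t - c * 1) / t ^ 2)))
      (fun t => c * k (-1 - (ν + 1)) t - k (-1 - (ν - 1)) t - ν * k (-1 - ν) t) (Ioi 0) := by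
    intro t (ht : 0 < t)
    have e : t ^ (-1 - (ν + 1)) = t ^ (-ν) / t ^ 2 := by
      rw [show -1 - (ν + 1) = -ν - 2 by ring, rpow_sub ht, rpow_two]
    simp only [hk_def, e, show -1 - (ν - 1) = -ν by ring, show -ν - 1 = -1 - ν by ring]
    field_simp
    ring
  have h₁ : IntegrableOn (fun t => c * k (-1 - (ν + 1)) t) (Ioi 0) := (hk _).const_mul c
  have h₂ : IntegrableOn (fun t => ν * k (-1 - ν) t) (Ioi 0) := (hk _).const_mul ν
  have h₃ : IntegrableOn (fun t => c * k (-1 - (ν + 1)) t - k (-1 - (ν - 1)) t) (Ioi 0) :=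
    h₁.sub (hk _)
  have hibp := integral_Ioi_deriv_mul_eq_sub hu hv
    ((h₃.sub h₂).congr_fun hcomb.symm measurableSet_Ioi)
    (tendsto_rpow_mul_exp_neg_sub_div_nhdsGT_zero (-ν) hc)
    (tendsto_rpow_mul_exp_neg_sub_div_atTop (-ν) c)
  rw [setIntegral_congr_fun measurableSet_Ioi hcomb, integral_sub h₃ h₂,
    integral_sub h₁ (hk _), integral_const_mul, integral_const_mul, sub_self] at hibp
  simp only [hJ]
  linarith

theorem macdonaldK_exp_neg (μ x : ℝ) :
    macdonaldK μ (exp (-x)) =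
      2 ^ (-μ) / 2 * (exp (-μ * x) * macdonaldIntegral μ (exp (-2 * x) / 4)) := by
  have hpow : (exp (-x) / 2) ^ μ = 2 ^ (-μ) * exp (-μ * x) := by
    rw [div_rpow (exp_pos _).le zero_le_two, ← exp_mul, rpow_neg zero_le_two]
    ring_nf
  have hsq : ∀ t, exp (-x) ^ 2 / (4 * t) = exp (-2 * x) / 4 / t := fun t => by
    rw [← exp_nat_mul, div_div]
    ring_nf
  simp only [macdonaldK, macdonaldIntegral, hpow, hsq]
  ring

theorem hasDerivAt_macdonaldIntegral_exp (ν x : ℝ) :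
    HasDerivAt (fun x => macdonaldIntegral ν (exp (-2 * x) / 4))
      (2 * (macdonaldIntegral (ν - 1) (exp (-2 * x) / 4) +
        ν * macdonaldIntegral ν (exp (-2 * x) / 4))) x := by
  have hc : 0 < exp (-2 * x) / 4 := by positivity
  have hinner : HasDerivAt (fun x => exp (-2 * x) / 4) (exp (-2 * x) * -2 / 4) x := by
    simpa using (((hasDerivAt_id x).const_mul (-2)).exp).div_const 4
  refine ((hasDerivAt_macdonaldIntegral ν hc).comp x hinner).congr_deriv ?_
  linear_combination 2 * macdonaldIntegral_recurrence ν hc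

theorem hasDerivAt_exp_mul_macdonaldIntegral_exp (μ x : ℝ) :
    HasDerivAt (fun x => exp (-μ * x) * macdonaldIntegral μ (exp (-2 * x) / 4))
      (exp (-μ * x) * (μ * macdonaldIntegral μ (exp (-2 * x) / 4) +
        2 * macdonaldIntegral (μ - 1) (exp (-2 * x) / 4))) x := by
  have hexp : HasDerivAt (fun x => exp (-μ * x)) (exp (-μ * x) * -μ) x := by
    simpa using ((hasDerivAt_id x).const_mul (-μ)).exp
  refine (hexp.mul (hasDerivAt_macdonaldIntegral_exp μ x)).congr_deriv ?_
  ring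

theorem hasDerivAt_exp_mul_macdonaldIntegral_exp_deriv (μ x : ℝ) :
    HasDerivAt (fun x => exp (-μ * x) * (μ * macdonaldIntegral μ (exp (-2 * x) / 4) +
        2 * macdonaldIntegral (μ - 1) (exp (-2 * x) / 4)))
      ((exp (-2 * x) + μ ^ 2) * (exp (-μ * x) * macdonaldIntegral μ (exp (-2 * x) / 4))) x := by
  have hexp : HasDerivAt (fun x => exp (-μ * x)) (exp (-μ * x) * -μ) x := by
    simpa using ((hasDerivAt_id x).const_mul (-μ)).exp
  have hrec := macdonaldIntegral_recurrence (μ - 1) (c := exp (-2 * x) / 4) (by positivity)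
  rw [sub_add_cancel] at hrec
  refine (hexp.mul (((hasDerivAt_macdonaldIntegral_exp μ x).const_mul μ).add
    ((hasDerivAt_macdonaldIntegral_exp (μ - 1) x).const_mul 2))).congr_deriv ?_
  simp only [Pi.add_apply]
  linear_combination (-4 * exp (-μ * x)) * hrec

/-- For every `μ ∈ ℝ`, the function `f(x) = K_μ(e^{-x})` is twice
differentiable and satisfies `f''(x) = (e^{-2x} + μ²) f(x)` for all `x`. -/
theorem macdonaldK_exp_neg_twice_differentiable_and_ode (μ : ℝ) :
    (∀ x : ℝ, DifferentiableAt ℝ (fun x => macdonaldK μ (Real.exp (-x))) x) ∧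
    (∀ x : ℝ, DifferentiableAt ℝ (deriv (fun x => macdonaldK μ (Real.exp (-x)))) x) ∧
    (∀ x : ℝ, deriv (deriv (fun x => macdonaldK μ (Real.exp (-x)))) x
      = (Real.exp (-2 * x) + μ ^ 2) * macdonaldK μ (Real.exp (-x))) := by
  have hK : (fun x => macdonaldK μ (exp (-x))) = fun x =>
      2 ^ (-μ) / 2 * (exp (-μ * x) * macdonaldIntegral μ (exp (-2 * x) / 4)) :=
    funext (macdonaldK_exp_neg μ)
  have h₁ (x : ℝ) := (hasDerivAt_exp_mul_macdonaldIntegral_exp μ x).const_mul (2 ^ (-μ) / 2)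
  have h₂ (x : ℝ) :=
    (hasDerivAt_exp_mul_macdonaldIntegral_exp_deriv μ x).const_mul (2 ^ (-μ) / 2)
  have hderiv : deriv (fun x => macdonaldK μ (exp (-x))) = fun x =>
      2 ^ (-μ) / 2 * (exp (-μ * x) * (μ * macdonaldIntegral μ (exp (-2 * x) / 4) +
        2 * macdonaldIntegral (μ - 1) (exp (-2 * x) / 4))) := by
    rw [hK]
    exact funext fun x => (h₁ x).deriv
  refine ⟨fun x => hK ▸ (h₁ x).differentiableAt,
    fun x => hderiv ▸ (h₂ x).differentiableAt, fun x => ?_⟩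
  rw [hderiv, (h₂ x).deriv, macdonaldK_exp_neg]
  ring
end

section
/- For all μ > 0, λ₁ > 0 and λ₂ ≥ 0, setting c = λ₂²/(2λ₁), one has e^{−λ₁} ∫_0^∞ e^{−t} t^{μ + c − 1/2} (2λ₁ + t)^{μ − c − 1/2} dt = (λ₁^{2μ+1} / 2) ∫_0^∞ exp(−(1/2)λ₂² s) · exp(−λ₁ coth(λ₁ s / 2)) · (sinh(λ₁ s / 2))^{−(2μ+1)} ds. -/
/-!
Substitute `t = λ₁ (coth (λ₁ s / 2) - 1) = 2λ₁ / (e^{λ₁ s} - 1)`, a decreasing bijection of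
`(0, ∞)`. With `σ = sinh (λ₁ s / 2)` one has `λ₁ + t = λ₁ coth (λ₁ s / 2)`,
`t (2λ₁ + t) = (λ₁ / σ)²`, `t / (2λ₁ + t) = e^{-λ₁ s}` and `|dt/ds| = (λ₁ / σ)² / 2`, so writing
`t^{μ+c-1/2} (2λ₁+t)^{μ-c-1/2} = (t (2λ₁+t))^{μ-1/2} (t / (2λ₁+t))^c` the two integrands agree
pointwise after the change of variables.
-/

open Real Set MeasureTheory

theorem cosh_div_sinh_sub_one {x : ℝ} (hx : x ≠ 0) :
    cosh x / sinh x - 1 = 2 / (exp (2 * x) - 1) := by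
  have hs : sinh x ≠ 0 := sinh_eq_zero.not.mpr hx
  have he : exp (2 * x) - 1 ≠ 0 := by
    rw [sub_ne_zero, Ne, exp_eq_one_iff]; simpa using hx
  rw [div_sub_one hs, cosh_sub_sinh, div_eq_div_iff hs he, sinh_eq,
    show 2 * x = x + x by ring, exp_add, exp_neg]
  field_simp

theorem hasDerivAt_cosh_div_sinh {x : ℝ} (hx : x ≠ 0) :
    HasDerivAt (fun y => cosh y / sinh y) (-(sinh x ^ 2)⁻¹) x := by
  have hs : sinh x ≠ 0 := sinh_eq_zero.not.mpr hx
  refine ((hasDerivAt_cosh x).div (hasDerivAt_sinh x) hs).congr_deriv ?_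
  field_simp
  linear_combination -cosh_sq x

noncomputable def cothSubst (l s : ℝ) : ℝ := l * (cosh (l * s / 2) / sinh (l * s / 2) - 1)

section cothSubst

variable {l s : ℝ}

theorem cothSubst_eq (h : l * s ≠ 0) : cothSubst l s = 2 * l / (exp (l * s) - 1) := by
  rw [cothSubst, cosh_div_sinh_sub_one (by simpa using h), mul_div_cancel₀ _ two_ne_zero]
  ring

theorem cothSubst_pos (hl : 0 < l) (hs : 0 < s) : 0 < cothSubst l s := by
  have : 1 < exp (l * s) := one_lt_exp_iff.mpr (mul_pos hl hs)
  rw [cothSubst_eq (mul_pos hl hs).ne']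
  exact div_pos (by linarith) (by linarith)

theorem cothSubst_mul_two_mul_add (h : l * s ≠ 0) :
    cothSubst l s * (2 * l + cothSubst l s) = (l / sinh (l * s / 2)) ^ 2 := by
  have hs : sinh (l * s / 2) ≠ 0 := sinh_eq_zero.not.mpr (by simpa using h)
  rw [cothSubst]
  field_simp
  linear_combination l ^ 2 * cosh_sq (l * s / 2)

theorem cothSubst_div_two_mul_add (h : l * s ≠ 0) :
    cothSubst l s / (2 * l + cothSubst l s) = exp (-(l * s)) := by
  have hl : l ≠ 0 := left_ne_zero_of_mul h
  have hs : sinh (l * s / 2) ≠ 0 := sinh_eq_zero.not.mpr (by simpa using h)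
  have hexp : (cosh (l * s / 2) - sinh (l * s / 2)) / (cosh (l * s / 2) + sinh (l * s / 2))
      = exp (-(l * s)) := by
    rw [cosh_sub_sinh, cosh_add_sinh, ← exp_sub]
    ring_nf
  have hsum : 2 * l + cothSubst l s
      = l * (cosh (l * s / 2) + sinh (l * s / 2)) / sinh (l * s / 2) := by
    rw [cothSubst]; field_simp; ring
  rw [hsum, ← hexp, cothSubst]
  field_simp

theorem hasDerivAt_cothSubst (h : l * s ≠ 0) :
    HasDerivAt (cothSubst l) (-(l / sinh (l * s / 2)) ^ 2 / 2) s := by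
  have hx : l * s / 2 ≠ 0 := by simpa using h
  have hlin : HasDerivAt (fun y => l * y / 2) (l / 2) s := by
    simpa using ((hasDerivAt_id s).const_mul l).div_const 2
  refine ((((hasDerivAt_cosh_div_sinh hx).comp s hlin).sub_const 1).const_mul l).congr_deriv ?_
  field_simp

theorem bijOn_cothSubst (hl : 0 < l) : BijOn (cothSubst l) (Ioi 0) (Ioi 0) := by
  let g : ℝ → ℝ := fun t => log (1 + 2 * l / t) / l
  have hg : MapsTo g (Ioi 0) (Ioi 0) := fun t (ht : 0 < t) =>
    div_pos (log_pos (by have := div_pos (mul_pos two_pos hl) ht; linarith)) hl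
  refine InvOn.bijOn ⟨fun s (hs : 0 < s) => ?_, fun t (ht : 0 < t) => ?_⟩
    (fun s hs => cothSubst_pos hl hs) hg
  · have h := (mul_pos hl hs).ne'
    have : exp (l * s) - 1 ≠ 0 := by linarith [one_lt_exp_iff.mpr (mul_pos hl hs)]
    simp only [g, cothSubst_eq h]
    field_simp
    rw [add_sub_cancel, log_exp]
  · have h := (mul_pos hl (hg ht)).ne'
    have hexp : exp (l * g t) = 1 + 2 * l / t := by
      rw [mul_div_cancel₀ _ hl.ne', exp_log (by positivity)]
    rw [cothSubst_eq h, hexp]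
    field_simp
    ring

end cothSubst

theorem rpow_add_mul_rpow_sub {x y : ℝ} (hx : 0 < x) (hy : 0 < y) (a c : ℝ) :
    x ^ (a + c) * y ^ (a - c) = (x * y) ^ a * (x / y) ^ c := by
  rw [mul_rpow hx.le hy.le, div_rpow hx.le hy.le, rpow_add hx, rpow_sub hy]
  field_simp

theorem sq_mul_sq_rpow {w : ℝ} (hw : 0 < w) (a : ℝ) : w ^ 2 * (w ^ 2) ^ a = w ^ (2 * a + 2) := by
  rw [← rpow_natCast, ← rpow_mul hw.le, rpow_add hw, mul_comm]
  norm_num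

theorem abs_deriv_mul_integrand_cothSubst {l s : ℝ} (hl : 0 < l) (hs : 0 < s) (μ c : ℝ) :
    exp (-l) * (|-(l / sinh (l * s / 2)) ^ 2 / 2| *
      (exp (-cothSubst l s) * cothSubst l s ^ (μ + c - 1 / 2) *
        (2 * l + cothSubst l s) ^ (μ - c - 1 / 2)))
      = l ^ (2 * μ + 1) / 2 * (exp (-(l * c) * s) *
        exp (-l * (cosh (l * s / 2) / sinh (l * s / 2))) * sinh (l * s / 2) ^ (-(2 * μ + 1))) := by
  have hls := (mul_pos hl hs).ne'
  have hσ : 0 < sinh (l * s / 2) := sinh_pos_iff.mpr (by positivity)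
  have hw : 0 < l / sinh (l * s / 2) := div_pos hl hσ
  have ht := cothSubst_pos hl hs
  have hpow : cothSubst l s ^ (μ + c - 1 / 2) * (2 * l + cothSubst l s) ^ (μ - c - 1 / 2)
      = ((l / sinh (l * s / 2)) ^ 2) ^ (μ - 1 / 2) * exp (-(l * c) * s) := by
    rw [show μ + c - 1 / 2 = (μ - 1 / 2) + c by ring, show μ - c - 1 / 2 = (μ - 1 / 2) - c by ring,
      rpow_add_mul_rpow_sub ht (by linarith), cothSubst_mul_two_mul_add hls,
      cothSubst_div_two_mul_add hls, ← exp_mul]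
    ring_nf
  have hexp : exp (-l) * exp (-cothSubst l s)
      = exp (-l * (cosh (l * s / 2) / sinh (l * s / 2))) := by
    rw [← exp_add, cothSubst]
    ring_nf
  have hσpow : (l / sinh (l * s / 2)) ^ 2 * ((l / sinh (l * s / 2)) ^ 2) ^ (μ - 1 / 2)
      = l ^ (2 * μ + 1) * sinh (l * s / 2) ^ (-(2 * μ + 1)) := by
    rw [sq_mul_sq_rpow hw, div_rpow hl.le hσ.le, rpow_neg hσ.le]
    ring_nf
  rw [abs_div, abs_neg, abs_two, abs_of_pos (pow_pos hw 2), mul_assoc (exp _), hpow]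
  linear_combination ((l / sinh (l * s / 2)) ^ 2 * ((l / sinh (l * s / 2)) ^ 2) ^ (μ - 1 / 2)
      * exp (-(l * c) * s) / 2) * hexp
    + (exp (-l * (cosh (l * s / 2) / sinh (l * s / 2))) * exp (-(l * c) * s) / 2) * hσpow

theorem conditional_laplace_integral_identity_general (μ lam1 lam2 : ℝ)
    (h1 : 0 < lam1) :
    Real.exp (-lam1) *
        ∫ t in Set.Ioi (0 : ℝ),
          Real.exp (-t) * t ^ (μ + lam2 ^ 2 / (2 * lam1) - 1 / 2) *
            (2 * lam1 + t) ^ (μ - lam2 ^ 2 / (2 * lam1) - 1 / 2)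
      = (lam1 ^ (2 * μ + 1) / 2) *
        ∫ s in Set.Ioi (0 : ℝ),
          Real.exp (-(1 / 2) * lam2 ^ 2 * s) *
            Real.exp (-lam1 * (Real.cosh (lam1 * s / 2) / Real.sinh (lam1 * s / 2))) *
              (Real.sinh (lam1 * s / 2)) ^ (-(2 * μ + 1)) := by
  have hbij := bijOn_cothSubst h1
  conv_lhs => rw [← hbij.image_eq, integral_image_eq_integral_abs_deriv_smul measurableSet_Ioi
    (fun s hs => (hasDerivAt_cothSubst (mul_pos h1 hs).ne').hasDerivWithinAt) hbij.injOn]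
  rw [← integral_const_mul, ← integral_const_mul]
  refine setIntegral_congr_fun measurableSet_Ioi fun s (hs : 0 < s) => ?_
  have hc : lam1 * (lam2 ^ 2 / (2 * lam1)) = 1 / 2 * lam2 ^ 2 := by field_simp
  have hintegrand := abs_deriv_mul_integrand_cothSubst h1 hs μ (lam2 ^ 2 / (2 * lam1))
  rw [hc] at hintegrand
  simpa only [smul_eq_mul, neg_mul] using hintegrand

/-- For all `μ > 0`, `λ₁ > 0` and `λ₂ ≥ 0`, with `c = λ₂²/(2λ₁)`,
`e^{-λ₁} ∫_0^∞ e^{-t} t^{μ+c-1/2} (2λ₁+t)^{μ-c-1/2} dt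
  = (λ₁^{2μ+1}/2) ∫_0^∞ e^{-λ₂²s/2} e^{-λ₁ coth(λ₁ s/2)} (sinh(λ₁ s/2))^{-(2μ+1)} ds`. -/
theorem conditional_laplace_integral_identity (μ lam1 lam2 : ℝ)
    (hμ : 0 < μ) (h1 : 0 < lam1) (h2 : 0 ≤ lam2) :
    Real.exp (-lam1) *
        ∫ t in Set.Ioi (0 : ℝ),
          Real.exp (-t) * t ^ (μ + lam2 ^ 2 / (2 * lam1) - 1 / 2) *
            (2 * lam1 + t) ^ (μ - lam2 ^ 2 / (2 * lam1) - 1 / 2)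
      = (lam1 ^ (2 * μ + 1) / 2) *
        ∫ s in Set.Ioi (0 : ℝ),
          Real.exp (-(1 / 2) * lam2 ^ 2 * s) *
            Real.exp (-lam1 * (Real.cosh (lam1 * s / 2) / Real.sinh (lam1 * s / 2))) *
              (Real.sinh (lam1 * s / 2)) ^ (-(2 * μ + 1)) :=
  conditional_laplace_integral_identity_general μ lam1 lam2 h1
end

section
/- Let a, b > 0 be real numbers. For integers n, m define c(n, m) = Γ(a+1)Γ(b+1)Γ(a+b+1)Γ(n+m+a+b+1) / (n! · m! · Γ(n+a+1)Γ(m+b+1)Γ(n+a+b+1)Γ(m+a+b+1)) if n ≥ 0 and m ≥ 0, and c(n, m) = 0 otherwise. Then c(0,0) = 1, and for all integers n, m ≥ 0 with (n, m) ≠ (0, 0), (n² + m² − nm + a n + b m) · c(n, m) = c(n−1, m) + c(n, m−1). -/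
open Real

/-- Bump's closed-form coefficients for the type `A₂` fundamental Whittaker function. -/
noncomputable def bumpCoeff (a b : ℝ) (n m : ℤ) : ℝ :=
  if 0 ≤ n ∧ 0 ≤ m then
    Real.Gamma (a + 1) * Real.Gamma (b + 1) * Real.Gamma (a + b + 1) *
        Real.Gamma ((n : ℝ) + (m : ℝ) + a + b + 1) /
      ((n.toNat).factorial * (m.toNat).factorial * Real.Gamma ((n : ℝ) + a + 1) *
        Real.Gamma ((m : ℝ) + b + 1) * Real.Gamma ((n : ℝ) + a + b + 1) *
        Real.Gamma ((m : ℝ) + a + b + 1))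
  else 0

/-! Each coefficient is a rational multiple of its left and lower neighbours, the ratios coming
from `Γ(s + 1) = s Γ(s)`; adding the two ratio identities gives the recursion, because
`(n + m + a + b) (n² + m² - nm + an + bm) = n (n + a) (n + a + b) + m (m + b) (m + a + b)`. -/

namespace bumpCoeff

theorem comm (a b : ℝ) (n m : ℤ) : bumpCoeff a b n m = bumpCoeff b a m n := by
  unfold bumpCoeff
  simp only [and_comm (a := 0 ≤ m)]
  split_ifs
  · ring_nf
  · rfl

theorem natCast (a b : ℝ) (n m : ℕ) :
    bumpCoeff a b n m =
      Gamma (a + 1) * Gamma (b + 1) * Gamma (a + b + 1) * Gamma (n + m + a + b + 1) /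
        (n.factorial * m.factorial * Gamma (n + a + 1) * Gamma (m + b + 1) * Gamma (n + a + b + 1) *
          Gamma (m + a + b + 1)) := by
  simp [bumpCoeff]

theorem zero_zero {a b : ℝ} (ha : 0 ≤ a) (hb : 0 ≤ b) : bumpCoeff a b 0 0 = 1 := by
  rw [← Nat.cast_zero, natCast]
  simp only [Nat.cast_zero, Nat.factorial_zero, Nat.cast_one, zero_add, one_mul]
  field_simp

theorem succ_left {a b : ℝ} (ha : 0 ≤ a) (hb : 0 ≤ b) (k m : ℕ) :
    ((k : ℝ) + m + a + b + 1) * bumpCoeff a b k m =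
      ((k : ℝ) + 1) * (k + a + 1) * (k + a + b + 1) * bumpCoeff a b (k + 1 : ℕ) m := by
  have shift {s t : ℝ} (hs : 0 < s) (ht : t = s + 1) : Gamma t = s * Gamma s := by
    rw [ht, Gamma_add_one hs.ne']
  rw [natCast, natCast, Nat.factorial_succ, Nat.cast_mul, Nat.cast_succ,
    shift (t := k + 1 + m + a + b + 1) (by positivity : (0 : ℝ) < k + m + a + b + 1) (by ring),
    shift (t := k + 1 + a + 1) (by positivity : (0 : ℝ) < k + a + 1) (by ring),
    shift (t := k + 1 + a + b + 1) (by positivity : (0 : ℝ) < k + a + b + 1) (by ring)]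
  field_simp

theorem sub_one_left {a b : ℝ} (ha : 0 ≤ a) (hb : 0 ≤ b) (n m : ℕ) :
    ((n : ℝ) + m + a + b) * bumpCoeff a b ((n : ℤ) - 1) m =
      (n : ℝ) * (n + a) * (n + a + b) * bumpCoeff a b n m := by
  cases n with
  | zero => simp [bumpCoeff]
  | succ k =>
    push_cast
    simpa [add_right_comm _ (1 : ℝ)] using succ_left ha hb k m

theorem sub_one_right {a b : ℝ} (ha : 0 ≤ a) (hb : 0 ≤ b) (n m : ℕ) :
    ((n : ℝ) + m + a + b) * bumpCoeff a b n ((m : ℤ) - 1) =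
      (m : ℝ) * (m + b) * (m + a + b) * bumpCoeff a b n m := by
  rw [comm, comm a b]
  convert sub_one_left hb ha m n using 2 <;> ring

end bumpCoeff

/-- for `a, b > 0`, Bump's coefficients satisfy `c(0,0) = 1` and the
recursion `(n² + m² − nm + an + bm) c(n,m) = c(n−1,m) + c(n,m−1)` for all integers
`n, m ≥ 0` with `(n,m) ≠ (0,0)`. -/
theorem bump_recursion (a b : ℝ) (ha : 0 < a) (hb : 0 < b) :
    bumpCoeff a b 0 0 = 1 ∧
    ∀ n m : ℤ, 0 ≤ n → 0 ≤ m → ¬(n = 0 ∧ m = 0) →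
      ((n : ℝ) ^ 2 + (m : ℝ) ^ 2 - (n : ℝ) * (m : ℝ) + a * n + b * m) * bumpCoeff a b n m
        = bumpCoeff a b (n - 1) m + bumpCoeff a b n (m - 1) := by
  refine ⟨bumpCoeff.zero_zero ha.le hb.le, fun n m hn hm _ => ?_⟩
  lift n to ℕ using hn
  lift m to ℕ using hm
  have hpos : (0 : ℝ) < n + m + a + b := by positivity
  refine mul_left_cancel₀ hpos.ne' ?_
  rw [mul_add, bumpCoeff.sub_one_left ha.le hb.le, bumpCoeff.sub_one_right ha.le hb.le]
  push_cast
  ring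
end
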